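/- With B = C ∪ ST(Γ₁ ∪ Γ₂) and B₁, B₂ the induced partial algebras, B₁ ≅ B₂ if and only if for all u, t ∈ B, u ∼_{Γ₁} t ⟺ u ∼_{Γ₂} t. -/

import Mathlib

namespace AFA

open Classical

/-- A functional signature: operation symbols with arities. Constants are arity-0 symbols. -/
structure Sig where
  Op : Type
  arity : Op → ℕ

/-- Ground terms over a signature. -/
inductive Tm (S : Sig) : Type
  | node (f : S.Op) (args : Fin (S.arity f) → Tm S) : Tm S

/-- The ground term given by a constant symbol. -/
def constTm (S : Sig) (c : S.Op) (h : S.arity c = 0) : Tm S :=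
  Tm.node c (fun i => absurd i.isLt (by omega))

/-- Height of a ground term (constants have height 0). -/
def Tm.height {S : Sig} : Tm S → ℕ
  | Tm.node _ a => Finset.univ.sup fun i => (a i).height + 1

/-- The i-th immediate subterm (child of the root of the syntax tree), if it exists. -/
def Tm.child {S : Sig} : Tm S → ℕ → Option (Tm S)
  | Tm.node f a, i => if h : i < S.arity f then some (a ⟨i, h⟩) else none

/-- A total algebra over the signature `S`. -/
structure Alg (S : Sig) where
  carrier : Type
  op : (f : S.Op) → (Fin (S.arity f) → carrier) → carrier

/-- Homomorphism of total algebras. -/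
structure Hom {S : Sig} (A B : Alg S) where
  toFun : A.carrier → B.carrier
  map : ∀ (f : S.Op) (a : Fin (S.arity f) → A.carrier),
    toFun (A.op f a) = B.op f (fun i => toFun (a i))

/-- Evaluation of a ground term in an algebra. -/
def Tm.eval {S : Sig} (A : Alg S) : Tm S → A.carrier
  | Tm.node f a => A.op f (fun i => (a i).eval A)

/-- An algebra is generated by the constants iff every element is the value of a ground term. -/
def GeneratedAlg {S : Sig} (A : Alg S) : Prop :=
  ∀ x : A.carrier, ∃ t : Tm S, t.eval A = x

/-- Isomorphism of total algebras. -/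
def AlgIso {S : Sig} (A B : Alg S) : Prop :=
  ∃ h : Hom A B, Function.Bijective h.toFun

/-- Derivability in equational logic from a set `Γ` of ground equations:
the smallest congruence containing `Γ`. `Thm Γ p q` means `Γ ⊢ p = q`. -/
inductive Thm {S : Sig} (Γ : Set (Tm S × Tm S)) : Tm S → Tm S → Prop
  | ax {p q : Tm S} : (p, q) ∈ Γ → Thm Γ p q
  | refl (t : Tm S) : Thm Γ t t
  | symm {p q : Tm S} : Thm Γ p q → Thm Γ q p
  | trans {p q r : Tm S} : Thm Γ p q → Thm Γ q r → Thm Γ p r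
  | congr {f : S.Op} {a b : Fin (S.arity f) → Tm S} :
      (∀ i, Thm Γ (a i) (b i)) → Thm Γ (Tm.node f a) (Tm.node f b)

/-- The setoid `∼_Γ` on ground terms. -/
def thmSetoid {S : Sig} (Γ : Set (Tm S × Tm S)) : Setoid (Tm S) :=
  ⟨Thm Γ, ⟨fun t => Thm.refl t, fun h => Thm.symm h, fun h₁ h₂ => Thm.trans h₁ h₂⟩⟩

/-- The quotient algebra `F_Γ = F/∼_Γ`. -/
noncomputable def FGamma {S : Sig} (Γ : Set (Tm S × Tm S)) : Alg S where
  carrier := Quotient (thmSetoid Γ)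
  op f a := Quotient.mk (thmSetoid Γ) (Tm.node f (fun i => (a i).out))

/-- Single-step ground rewriting: replace a subterm which is one side of an
equation of `Γ` by the other side. -/
inductive Step {S : Sig} (Γ : Set (Tm S × Tm S)) : Tm S → Tm S → Prop
  | here {p q : Tm S} : (p, q) ∈ Γ ∨ (q, p) ∈ Γ → Step Γ p q
  | sub {f : S.Op} {a b : Fin (S.arity f) → Tm S} (i : Fin (S.arity f)) :
      Step Γ (a i) (b i) → (∀ j, j ≠ i → a j = b j) → Step Γ (Tm.node f a) (Tm.node f b)

/-- Subterm relation on ground terms. -/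
inductive Subterm {S : Sig} : Tm S → Tm S → Prop
  | refl (t : Tm S) : Subterm t t
  | step {s : Tm S} {f : S.Op} {a : Fin (S.arity f) → Tm S} (i : Fin (S.arity f)) :
      Subterm s (a i) → Subterm s (Tm.node f a)

/-- `p` occurs in `Γ` (is one side of an equation of `Γ`). -/
def SideOf {S : Sig} (Γ : Set (Tm S × Tm S)) (p : Tm S) : Prop :=
  ∃ e ∈ Γ, p = e.1 ∨ p = e.2

/-- `ST Γ`: all subterms of terms occurring in `Γ`. -/
def ST {S : Sig} (Γ : Set (Tm S × Tm S)) : Set (Tm S) :=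
  {t | ∃ e ∈ Γ, Subterm t e.1 ∨ Subterm t e.2}

/-- A term "has a type" if it is `∼_Γ`-equivalent to a term mentioned in `Γ`. -/
def HasType {S : Sig} (Γ : Set (Tm S × Tm S)) (t : Tm S) : Prop :=
  ∃ p, SideOf Γ p ∧ Thm Γ t p

/-- `w` is an immediate subterm of `u`. -/
def ImmSub {S : Sig} (w u : Tm S) : Prop :=
  ∃ (f : S.Op) (a : Fin (S.arity f) → Tm S) (i : Fin (S.arity f)), u = Tm.node f a ∧ a i = w

/-- Edge relation of the quotient graph `R̂_Γ`: there is a directed edge from the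
class of `u` to the class of `w` iff some `Γ`-subterm-occurrence `u'` equivalent to `u`
has an immediate subterm `w'` equivalent to `w`. -/
def EdgeHat {S : Sig} (Γ : Set (Tm S × Tm S)) (u w : Tm S) : Prop :=
  ∃ u' w', u' ∈ ST Γ ∧ w' ∈ ST Γ ∧ Thm Γ u u' ∧ Thm Γ w w' ∧ ImmSub w' u'

/-- A directed cycle of `R̂_Γ` is reachable from (the class of) `t` by a directed path. -/
def CyclicFrom {S : Sig} (Γ : Set (Tm S × Tm S)) (t : Tm S) : Prop :=
  ∃ u, Relation.ReflTransGen (EdgeHat Γ) t u ∧ Relation.TransGen (EdgeHat Γ) u u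

/-- `t` is of cyclic type: `t` is `∼_Γ`-equivalent to a term mentioned in `Γ`
whose type is cyclic. -/
def OfCyclicType {S : Sig} (Γ : Set (Tm S × Tm S)) (t : Tm S) : Prop :=
  ∃ p, SideOf Γ p ∧ Thm Γ t p ∧ CyclicFrom Γ p

/-- The canonical representative map: given a choice function `r` assigning to each
typed term the fixed representative of its type, replace each maximal typed subterm
of `t` by the chosen representative. -/
noncomputable def repMap {S : Sig} (Γ : Set (Tm S × Tm S)) (r : Tm S → Tm S) : Tm S → Tm S
  | Tm.node f a =>
      if HasType Γ (Tm.node f a) then r (Tm.node f a)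
      else Tm.node f fun i => repMap Γ r (a i)

/-- A partial algebra over `S`. -/
structure PAlg (S : Sig) where
  carrier : Type
  pop : (f : S.Op) → (Fin (S.arity f) → carrier) → Option carrier

/-- An embedding exhibiting the partial algebra `B` as a substructure of the
total algebra `A`. -/
structure PEmb {S : Sig} (B : PAlg S) (A : Alg S) where
  toFun : B.carrier → A.carrier
  inj : Function.Injective toFun
  map : ∀ (f : S.Op) (b : Fin (S.arity f) → B.carrier) (c : B.carrier),
    B.pop f b = some c → A.op f (fun i => toFun (b i)) = toFun c

/-- `A` is free over the partial algebra `B` (via the substructure embedding `e`):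
every (constant-generated) algebra containing `B` as a substructure is a homomorphic
image of `A` via a homomorphism fixing `B` pointwise. -/
def IsFreeOver {S : Sig} (A : Alg S) (B : PAlg S) (e : PEmb B A) : Prop :=
  ∀ (C : Alg S), GeneratedAlg C → ∀ e' : PEmb B C,
    ∃ h : Hom A C, Function.Surjective h.toFun ∧ ∀ b, h.toFun (e.toFun b) = e'.toFun b

/-- Elements of a partial algebra generated from constants via the defined operations. -/
inductive PGen {S : Sig} (B : PAlg S) : B.carrier → Prop
  | op {f : S.Op} {b : Fin (S.arity f) → B.carrier} {c : B.carrier} :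
      (∀ i, PGen B (b i)) → B.pop f b = some c → PGen B c

/-- A partial algebra is generated by the constants. -/
def PGenerated {S : Sig} (B : PAlg S) : Prop := ∀ x, PGen B x

/-- Raw `B`-terms: terms built over elements of the partial algebra `B`. -/
inductive BTm {S : Sig} (B : PAlg S) : Type
  | base (b : B.carrier) : BTm B
  | app (f : S.Op) (args : Fin (S.arity f) → BTm B) : BTm B

/-- Normal `B`-terms: an application node is allowed only when it cannot be
evaluated in `B`. -/
inductive Normal {S : Sig} {B : PAlg S} : BTm B → Prop
  | base (b : B.carrier) : Normal (BTm.base b)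
  | app {f : S.Op} {args : Fin (S.arity f) → BTm B} :
      (∀ i, Normal (args i)) →
      ¬(∃ (b : Fin (S.arity f) → B.carrier) (c : B.carrier),
          (∀ i, args i = BTm.base (b i)) ∧ B.pop f b = some c) →
      Normal (BTm.app f args)

/-- The free total extension `F(B)` of the partial algebra `B`: its elements are
the normal `B`-terms; an operation evaluates in `B` whenever possible, and forms
a formal term otherwise. -/
noncomputable def FB {S : Sig} (B : PAlg S) : Alg S where
  carrier := {t : BTm B // Normal t}
  op f args :=
    if h : ∃ (b : Fin (S.arity f) → B.carrier) (c : B.carrier),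
        (∀ i, (args i).1 = BTm.base (b i)) ∧ B.pop f b = some c
    then ⟨BTm.base h.choose_spec.choose, Normal.base _⟩
    else ⟨BTm.app f (fun i => (args i).1), Normal.app (fun i => (args i).2) h⟩

/-- The canonical inclusion of `B` into `F(B)`. -/
def embB {S : Sig} (B : PAlg S) (b : B.carrier) : (FB B).carrier :=
  ⟨BTm.base b, Normal.base b⟩

/-- Terms with variables. -/
inductive TmV (S : Sig) : Type
  | var (n : ℕ) : TmV S
  | node (f : S.Op) (args : Fin (S.arity f) → TmV S) : TmV S

/-- Ground substitution into a term with variables. -/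
def TmV.substG {S : Sig} (ρ : ℕ → Tm S) : TmV S → Tm S
  | TmV.var n => ρ n
  | TmV.node f a => Tm.node f (fun i => (a i).substG ρ)

/-- Evaluation of a term with variables under an assignment. -/
def TmV.evalV {S : Sig} (A : Alg S) (ρ : ℕ → A.carrier) : TmV S → A.carrier
  | TmV.var n => ρ n
  | TmV.node f a => A.op f (fun i => (a i).evalV A ρ)

/-- All ground instances of a set of (possibly non-ground) equations. -/
def GroundInstances {S : Sig} (Γ : Set (TmV S × TmV S)) : Set (Tm S × Tm S) :=
  {pq | ∃ e ∈ Γ, ∃ ρ : ℕ → Tm S, pq.1 = e.1.substG ρ ∧ pq.2 = e.2.substG ρ}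

/-- `A ⊨ Γ` for a set of (possibly non-ground) equations. -/
def SatV {S : Sig} (A : Alg S) (Γ : Set (TmV S × TmV S)) : Prop :=
  ∀ e ∈ Γ, ∀ ρ : ℕ → A.carrier, TmV.evalV A ρ e.1 = TmV.evalV A ρ e.2

/-- The finite partial algebra of `∼_Γ`-classes containing a term of height `≤ N`. -/
noncomputable def heightPAlg {S : Sig} (Γ : Set (Tm S × Tm S)) (N : ℕ) : PAlg S where
  carrier := {x : Quotient (thmSetoid Γ) //
    ∃ t : Tm S, t.height ≤ N ∧ Quotient.mk (thmSetoid Γ) t = x}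
  pop f b :=
    if h : ∃ t : Tm S, t.height ≤ N ∧
        Quotient.mk (thmSetoid Γ) t =
          Quotient.mk (thmSetoid Γ) (Tm.node f (fun i => (b i).1.out))
    then some ⟨Quotient.mk (thmSetoid Γ) (Tm.node f (fun i => (b i).1.out)), h⟩
    else none

/-- The set `B = C ∪ ST(Γ₁ ∪ Γ₂)`. -/
def BSet {S : Sig} (Γ₁ Γ₂ : Set (Tm S × Tm S)) : Set (Tm S) :=
  {t | (∃ (c : S.Op) (h : S.arity c = 0), t = constTm S c h) ∨ t ∈ ST (Γ₁ ∪ Γ₂)}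

/-- The partial algebra induced by `Γ` on the `∼_Γ`-classes of terms of `Bs`:
`f` applied to classes is defined iff the class of the resulting term again
contains a term of `Bs`. -/
noncomputable def BAlg {S : Sig} (Γ : Set (Tm S × Tm S)) (Bs : Set (Tm S)) : PAlg S where
  carrier := Quotient (Setoid.comap (Subtype.val : Bs → Tm S) (thmSetoid Γ))
  pop f b :=
    if h : ∃ u : Bs, Thm Γ u.1 (Tm.node f (fun i => ((b i).out).1))
    then some (Quotient.mk (Setoid.comap (Subtype.val : Bs → Tm S) (thmSetoid Γ)) h.choose)
    else none

/-- The class of `t ∈ Bs` as an element of `BAlg Γ Bs`. -/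
noncomputable def BAlgMk {S : Sig} (Γ : Set (Tm S × Tm S)) (Bs : Set (Tm S))
    (t : Tm S) (ht : t ∈ Bs) : (BAlg Γ Bs).carrier :=
  Quotient.mk (Setoid.comap (Subtype.val : Bs → Tm S) (thmSetoid Γ)) ⟨t, ht⟩

/-- Isomorphism of partial algebras: a bijection preserving definedness and
values of the partial operations in both directions. -/
def PIso {S : Sig} (B₁ B₂ : PAlg S) : Prop :=
  ∃ e : B₁.carrier ≃ B₂.carrier,
    ∀ (f : S.Op) (b : Fin (S.arity f) → B₁.carrier),
      Option.map e (B₁.pop f b) = B₂.pop f (fun i => e (b i))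

/-- The algebra structure on `∼_Γ`-classes of `ST(Γ)`, defined via the closure
hypothesis `hf`. -/
noncomputable def STAlg {S : Sig} (Γ : Set (Tm S × Tm S))
    (hf : ∀ (f : S.Op) (a : Fin (S.arity f) → Tm S), (∀ i, a i ∈ ST Γ) →
      ∃ u ∈ ST Γ, Thm Γ (Tm.node f a) u) : Alg S where
  carrier := Quotient (Setoid.comap (Subtype.val : ST Γ → Tm S) (thmSetoid Γ))
  op f a :=
    let h := hf f (fun i => ((a i).out).1) (fun i => ((a i).out).2)
    Quotient.mk (Setoid.comap (Subtype.val : ST Γ → Tm S) (thmSetoid Γ))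
      ⟨h.choose, h.choose_spec.1⟩

/-- The map `φ : F → ST(Γ)` defined inductively by choosing, at each application,
a `∼_Γ`-equivalent member of `ST(Γ)`. -/
noncomputable def phiST {S : Sig} (Γ : Set (Tm S × Tm S))
    (hf : ∀ (f : S.Op) (a : Fin (S.arity f) → Tm S), (∀ i, a i ∈ ST Γ) →
      ∃ u ∈ ST Γ, Thm Γ (Tm.node f a) u) : Tm S → {u : Tm S // u ∈ ST Γ}
  | Tm.node f a =>
      let ih := fun i => phiST Γ hf (a i)
      let h := hf f (fun i => (ih i).1) (fun i => (ih i).2)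
      ⟨h.choose, h.choose_spec.1⟩

/-- The tester predicate `Is_f` on `F(B)`: holds of `a` iff `a ∉ B` and `a` is a
formal term with head symbol `f`. -/
def IsTester {S : Sig} {B : PAlg S} (f : S.Op) (a : (FB B).carrier) : Prop :=
  ∃ args : Fin (S.arity f) → BTm B, a.1 = BTm.app f args


/-!
Both partial algebras live on the classes of the same subterm-closed set `B` of terms, with
an operation defined exactly when the application is equivalent to a term of `B`.
An isomorphism must be the identity on classes: by induction on `t ∈ B`, the class of
`f(a₁, …, aₙ)` is the value of `f` on the classes of the `aᵢ ∈ B`. Conversely, if `∼_{Γ₁}` and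
`∼_{Γ₂}` agree on `B`, the identity on classes is a bijection, and it preserves definedness
because a derivation of `u = f(w)` from `Γ` passes through an application `f(v)`, `vᵢ ∼_Γ wᵢ`,
which is `u` itself or a side of an equation of `Γ`; in either case `f(v)` and all `vᵢ` lie in
`B`, so `u ∼ f(v)` and `vᵢ ∼ wᵢ` transfer from `Γ₁` to `Γ₂`.
-/

section

variable {S : Sig}

theorem Subterm.trans {a b c : Tm S} (h₁ : Subterm a b) (h₂ : Subterm b c) : Subterm a c := by
  induction h₂ with
  | refl => exact h₁
  | step i _ ih => exact Subterm.step i ih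

def ChildClosed (Bs : Set (Tm S)) : Prop :=
  ∀ ⦃f : S.Op⦄ ⦃a : Fin (S.arity f) → Tm S⦄, Tm.node f a ∈ Bs → ∀ i, a i ∈ Bs

theorem ST_childClosed (Γ : Set (Tm S × Tm S)) : ChildClosed (ST Γ) := by
  rintro f a ⟨e, he, hsub⟩ i
  have hi : Subterm (a i) (Tm.node f a) := Subterm.step i (Subterm.refl _)
  exact ⟨e, he, hsub.imp hi.trans hi.trans⟩

theorem BSet_childClosed (Γ₁ Γ₂ : Set (Tm S × Tm S)) : ChildClosed (BSet Γ₁ Γ₂) := by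
  rintro f a (⟨c, hc, hfa⟩ | hST) i
  · cases hfa
    exact absurd i.isLt (by omega)
  · exact Or.inr (ST_childClosed _ hST i)

theorem SideOf.mem_ST {Γ : Set (Tm S × Tm S)} {p : Tm S} (h : SideOf Γ p) : p ∈ ST Γ := by
  obtain ⟨e, he, rfl | rfl⟩ := h
  exacts [⟨e, he, Or.inl (Subterm.refl _)⟩, ⟨e, he, Or.inr (Subterm.refl _)⟩]

theorem ST_mono {Γ Δ : Set (Tm S × Tm S)} (h : Γ ⊆ Δ) : ST Γ ⊆ ST Δ :=
  fun _ ⟨e, he, hsub⟩ => ⟨e, h he, hsub⟩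

theorem SideOf.mem_BSet_left {Γ₁ Γ₂ : Set (Tm S × Tm S)} {p : Tm S} (h : SideOf Γ₁ p) :
    p ∈ BSet Γ₁ Γ₂ :=
  Or.inr (ST_mono Set.subset_union_left h.mem_ST)

theorem SideOf.mem_BSet_right {Γ₁ Γ₂ : Set (Tm S × Tm S)} {p : Tm S} (h : SideOf Γ₂ p) :
    p ∈ BSet Γ₁ Γ₂ :=
  Or.inr (ST_mono Set.subset_union_right h.mem_ST)

def NodeWitness (Γ : Set (Tm S × Tm S)) (s : Tm S) (f : S.Op)
    (w : Fin (S.arity f) → Tm S) : Prop :=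
  ∃ v, (Tm.node f v = s ∨ SideOf Γ (Tm.node f v)) ∧ Thm Γ s (Tm.node f v) ∧
    ∀ i, Thm Γ (v i) (w i)

theorem NodeWitness.of_thm {Γ : Set (Tm S × Tm S)} {p q : Tm S} {f : S.Op}
    {w : Fin (S.arity f) → Tm S} (hpq : Thm Γ p q) (hq : NodeWitness Γ q f w)
    (hp : ∀ v, q = Tm.node f v → NodeWitness Γ p f v) : NodeWitness Γ p f w := by
  obtain ⟨v, rfl | hside, hqv, hvw⟩ := hq
  · obtain ⟨v', hv', hpv', hv'v⟩ := hp v rfl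
    exact ⟨v', hv', hpv', fun i => (hv'v i).trans (hvw i)⟩
  · exact ⟨v, Or.inr hside, hpq.trans hqv, hvw⟩

-- Both directions are carried along so that the induction passes the `symm` rule.
theorem Thm.nodeWitness_and_nodeWitness {Γ : Set (Tm S × Tm S)} {s t : Tm S}
    (h : Thm Γ s t) :
    (∀ f w, t = Tm.node f w → NodeWitness Γ s f w) ∧
      (∀ f w, s = Tm.node f w → NodeWitness Γ t f w) := by
  induction h with
  | @ax p q hpq =>
    exact ⟨fun f w hq =>
        ⟨w, Or.inr ⟨_, hpq, Or.inr hq.symm⟩, hq ▸ Thm.ax hpq, fun _ => Thm.refl _⟩,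
      fun f w hp =>
        ⟨w, Or.inr ⟨_, hpq, Or.inl hp.symm⟩, hp ▸ (Thm.ax hpq).symm, fun _ => Thm.refl _⟩⟩
  | refl t =>
    have hwit : ∀ f w, t = Tm.node f w → NodeWitness Γ t f w :=
      fun f w ht => ⟨w, Or.inl ht.symm, ht ▸ Thm.refl t, fun _ => Thm.refl _⟩
    exact ⟨hwit, hwit⟩
  | symm _ ih => exact ⟨ih.2, ih.1⟩
  | trans h₁ h₂ ih₁ ih₂ =>
    exact ⟨fun f w hr => NodeWitness.of_thm h₁ (ih₂.1 f w hr) (ih₁.1 f),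
      fun f w hp => NodeWitness.of_thm h₂.symm (ih₁.2 f w hp) (ih₂.2 f)⟩
  | @congr f a b hab =>
    refine ⟨fun g w hw => ?_, fun g w hw => ?_⟩ <;> cases hw
    exacts [⟨a, Or.inl rfl, Thm.refl _, hab⟩, ⟨b, Or.inl rfl, Thm.refl _, fun i => (hab i).symm⟩]

theorem Thm.nodeWitness {Γ : Set (Tm S × Tm S)} {s : Tm S} {f : S.Op}
    {w : Fin (S.arity f) → Tm S} (h : Thm Γ s (Tm.node f w)) : NodeWitness Γ s f w :=
  h.nodeWitness_and_nodeWitness.1 f w rfl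

theorem Thm.transfer_node {Γ Γ' : Set (Tm S × Tm S)} {Bs : Set (Tm S)} (hBs : ChildClosed Bs)
    (hside : ∀ p, SideOf Γ p → p ∈ Bs) (himp : ∀ u ∈ Bs, ∀ t ∈ Bs, Thm Γ u t → Thm Γ' u t)
    {u : Tm S} {f : S.Op} {w : Fin (S.arity f) → Tm S} (hu : u ∈ Bs) (hw : ∀ i, w i ∈ Bs)
    (h : Thm Γ u (Tm.node f w)) : Thm Γ' u (Tm.node f w) := by
  obtain ⟨v, hv, huv, hvw⟩ := h.nodeWitness
  have hvB : Tm.node f v ∈ Bs := hv.elim (· ▸ hu) (hside _)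
  exact (himp _ hu _ hvB huv).trans (Thm.congr fun i => himp _ (hBs hvB i) _ (hw i) (hvw i))

section BAlg

variable {Γ : Set (Tm S × Tm S)} {Bs : Set (Tm S)}

theorem BAlgMk_eq_iff {u t : Tm S} (hu : u ∈ Bs) (ht : t ∈ Bs) :
    BAlgMk Γ Bs u hu = BAlgMk Γ Bs t ht ↔ Thm Γ u t :=
  Quotient.eq

theorem thm_out_BAlgMk {t : Tm S} (ht : t ∈ Bs) : Thm Γ (BAlgMk Γ Bs t ht).out.1 t :=
  Quotient.mk_out (s := Setoid.comap Subtype.val (thmSetoid Γ)) _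

theorem BAlg_pop_mk_of_thm {f : S.Op} {x : Fin (S.arity f) → Tm S} (hx : ∀ i, x i ∈ Bs)
    {u : Tm S} (hu : u ∈ Bs) (h : Thm Γ u (Tm.node f x)) :
    (BAlg Γ Bs).pop f (fun i => BAlgMk Γ Bs (x i) (hx i)) = some (BAlgMk Γ Bs u hu) := by
  have hu' : Thm Γ u (Tm.node f fun i => (BAlgMk Γ Bs (x i) (hx i)).out.1) :=
    h.trans (Thm.congr fun i => (thm_out_BAlgMk (hx i)).symm)
  have hex : ∃ v : Bs, Thm Γ v.1 (Tm.node f fun i => (BAlgMk Γ Bs (x i) (hx i)).out.1) :=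
    ⟨⟨u, hu⟩, hu'⟩
  simp only [BAlg, dif_pos hex]
  exact congrArg some (Quotient.sound (hex.choose_spec.trans hu'.symm))

theorem BAlg_pop_mk_eq_none {f : S.Op} {x : Fin (S.arity f) → Tm S} (hx : ∀ i, x i ∈ Bs)
    (h : ¬∃ u : Bs, Thm Γ u.1 (Tm.node f x)) :
    (BAlg Γ Bs).pop f (fun i => BAlgMk Γ Bs (x i) (hx i)) = none := by
  have hnex : ¬∃ v : Bs, Thm Γ v.1 (Tm.node f fun i => (BAlgMk Γ Bs (x i) (hx i)).out.1) :=
    fun ⟨v, hv⟩ => h ⟨v, hv.trans (Thm.congr fun i => thm_out_BAlgMk (hx i))⟩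
  simp only [BAlg, dif_neg hnex]

end BAlg

theorem thm_iff_of_pIso {Γ₁ Γ₂ : Set (Tm S × Tm S)} {Bs : Set (Tm S)} (hBs : ChildClosed Bs)
    (h : PIso (BAlg Γ₁ Bs) (BAlg Γ₂ Bs)) : ∀ u ∈ Bs, ∀ t ∈ Bs, Thm Γ₁ u t ↔ Thm Γ₂ u t := by
  obtain ⟨e, he⟩ := h
  have he_mk : ∀ t (ht : t ∈ Bs), e (BAlgMk Γ₁ Bs t ht) = BAlgMk Γ₂ Bs t ht := by
    intro t
    induction t with
    | node f a ih =>
      intro ht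
      have hpop := he f fun i => BAlgMk Γ₁ Bs (a i) (hBs ht i)
      simp only [ih _ (hBs ht _), BAlg_pop_mk_of_thm (hBs ht) ht (Thm.refl _),
        Option.map_some] at hpop
      exact Option.some.inj hpop
  intro u hu t ht
  rw [← BAlgMk_eq_iff hu ht, ← BAlgMk_eq_iff hu ht, ← he_mk u hu, ← he_mk t ht,
    e.apply_eq_iff_eq]

theorem pIso_of_thm_iff {Γ₁ Γ₂ : Set (Tm S × Tm S)} {Bs : Set (Tm S)} (hBs : ChildClosed Bs)
    (hside₁ : ∀ p, SideOf Γ₁ p → p ∈ Bs) (hside₂ : ∀ p, SideOf Γ₂ p → p ∈ Bs)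
    (h : ∀ u ∈ Bs, ∀ t ∈ Bs, Thm Γ₁ u t ↔ Thm Γ₂ u t) : PIso (BAlg Γ₁ Bs) (BAlg Γ₂ Bs) := by
  let e : (BAlg Γ₁ Bs).carrier ≃ (BAlg Γ₂ Bs).carrier :=
    Quotient.congr (Equiv.refl Bs) fun x y => h x.1 x.2 y.1 y.2
  have he_mk : ∀ t (ht : t ∈ Bs), e (BAlgMk Γ₁ Bs t ht) = BAlgMk Γ₂ Bs t ht := fun _ _ => rfl
  refine ⟨e, fun f b => ?_⟩
  obtain ⟨x, hx, rfl⟩ : ∃ (x : Fin (S.arity f) → Tm S) (hx : ∀ i, x i ∈ Bs),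
      b = fun i => BAlgMk Γ₁ Bs (x i) (hx i) :=
    ⟨fun i => (b i).out.1, fun i => (b i).out.2, funext fun i => (Quotient.out_eq (b i)).symm⟩
  simp only [he_mk]
  have htransfer₁ : ∀ {u}, u ∈ Bs → Thm Γ₁ u (Tm.node f x) → Thm Γ₂ u (Tm.node f x) := fun hu =>
    Thm.transfer_node hBs hside₁ (fun u hu t ht => (h u hu t ht).1) hu hx
  have htransfer₂ : ∀ {u}, u ∈ Bs → Thm Γ₂ u (Tm.node f x) → Thm Γ₁ u (Tm.node f x) := fun hu =>
    Thm.transfer_node hBs hside₂ (fun u hu t ht => (h u hu t ht).2) hu hx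
  by_cases hdef : ∃ u : Bs, Thm Γ₁ u.1 (Tm.node f x)
  · obtain ⟨⟨u, hu⟩, hu₁⟩ := hdef
    rw [BAlg_pop_mk_of_thm hx hu hu₁, BAlg_pop_mk_of_thm hx hu (htransfer₁ hu hu₁)]
    rfl
  · have hdef₂ : ¬∃ u : Bs, Thm Γ₂ u.1 (Tm.node f x) :=
      fun ⟨u, hu₂⟩ => hdef ⟨u, htransfer₂ u.2 hu₂⟩
    rw [BAlg_pop_mk_eq_none hx hdef, BAlg_pop_mk_eq_none hx hdef₂, Option.map_none]

end

theorem stmt15_general (S : Sig) (Γ₁ Γ₂ : Set (Tm S × Tm S)) :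
    PIso (BAlg Γ₁ (BSet Γ₁ Γ₂)) (BAlg Γ₂ (BSet Γ₁ Γ₂)) ↔
      ∀ u ∈ BSet Γ₁ Γ₂, ∀ t ∈ BSet Γ₁ Γ₂, (Thm Γ₁ u t ↔ Thm Γ₂ u t) :=
  ⟨thm_iff_of_pIso (BSet_childClosed Γ₁ Γ₂),
    pIso_of_thm_iff (BSet_childClosed Γ₁ Γ₂) (fun _ => SideOf.mem_BSet_left)
      fun _ => SideOf.mem_BSet_right⟩

/-- With `B = C ∪ ST(Γ₁ ∪ Γ₂)` and `B₁`, `B₂` the induced partial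
algebras, `B₁ ≅ B₂` iff for all `u, t ∈ B`, `u ∼_{Γ₁} t ⟺ u ∼_{Γ₂} t`. -/
theorem stmt15 (S : Sig) [Fintype S.Op] (Γ₁ Γ₂ : Set (Tm S × Tm S))
    (h₁ : Γ₁.Finite) (h₂ : Γ₂.Finite) :
    PIso (BAlg Γ₁ (BSet Γ₁ Γ₂)) (BAlg Γ₂ (BSet Γ₁ Γ₂)) ↔
      ∀ u ∈ BSet Γ₁ Γ₂, ∀ t ∈ BSet Γ₁ Γ₂, (Thm Γ₁ u t ↔ Thm Γ₂ u t) :=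
  stmt15_general S Γ₁ Γ₂

end AFA
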